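/- Let n ≥ 2 and let A be a Young function satisfying condition (δ) with exponents 1 < p⁻ ≤ p⁺ < n, conditions (A2) and (A3), and p⁺ < (p⁻)_*. Let A_n = A ∘ H⁻¹, let M_n(t) = M(t, A_n) be the Matuszewska–Orlicz function of A_n, and let A_∞(t) = max{t^{p⁺}, t^{p⁻}}. Let ν and μ be nonnegative finite Borel measures on ℝⁿ, and suppose there is a constant S > 0 such that S·‖χ_U‖_{M_n,ν} ≤ ‖χ_U‖_{A_∞,μ} for every Borel set U. Then ν is absolutely continuous with respect to μ, and its Radon–Nikodym density f = dν/dμ is essentially bounded with respect to μ (f ∈ L^∞_μ). -/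

import Mathlib

open MeasureTheory Filter Set intervalIntegral Topology
open scoped ENNReal NNReal

noncomputable section

/-- `A` is a Young function with density `a`. -/
def IsYoungPair (a A : ℝ → ℝ) : Prop :=
  a 0 = 0 ∧ (∀ s, 0 < s → 0 < a s) ∧
  (∀ s, 0 ≤ s → ContinuousWithinAt a (Set.Ici s) s) ∧
  MonotoneOn a (Set.Ioi 0) ∧
  ∀ t, 0 ≤ t → A t = ∫ τ in (0:ℝ)..t, a τ

/-- The function `H(t) = (∫₀ᵗ (τ/A(τ))^{1/(n-1)} dτ)^{(n-1)/n}`. -/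
def Hfun (A : ℝ → ℝ) (n : ℕ) (t : ℝ) : ℝ :=
  (∫ τ in (0:ℝ)..t, (τ / A τ) ^ ((1:ℝ) / ((n:ℝ) - 1))) ^ (((n:ℝ) - 1) / (n:ℝ))

/-- The Matuszewska–Orlicz function of `N`: `M(t,N) = limsup_{s→∞} N(st)/N(s)`. -/
def matus (N : ℝ → ℝ) (t : ℝ) : ℝ :=
  Filter.limsup (fun s => N (s * t) / N s) Filter.atTop

/-- The Luxemburg norm of `u` with respect to the Young function `B` and the measure `ν`. -/
def luxNorm {α : Type*} [MeasurableSpace α] (B : ℝ → ℝ) (ν : Measure α) (u : α → ℝ) : ℝ :=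
  sInf {l : ℝ | 0 < l ∧ ∫ x, B (|u x| / l) ∂ν ≤ 1}

variable {a A : ℝ → ℝ} {pm pp : ℝ} {n : ℕ}

lemma young_a_monoIci (hA : IsYoungPair a A) : MonotoneOn a (Ici 0) := by
  obtain ⟨h0, hpos, _, hmono, _⟩ := hA
  intro x hx y hy hxy
  rcases eq_or_lt_of_le (mem_Ici.mp hx) with h | h
  · rcases eq_or_lt_of_le (mem_Ici.mp hy) with h' | h'
    · rw [← h, ← h']
    · rw [← h, h0]; exact (hpos y h').le
  · exact hmono h (lt_of_lt_of_le h hxy) hxy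

lemma young_a_nonneg (hA : IsYoungPair a A) {s : ℝ} (hs : 0 ≤ s) : 0 ≤ a s := by
  rcases eq_or_lt_of_le hs with h | h
  · rw [← h, hA.1]
  · exact (hA.2.1 s h).le

lemma young_a_intInt (hA : IsYoungPair a A) {u v : ℝ} (hu : 0 ≤ u) (hv : 0 ≤ v) :
    IntervalIntegrable a volume u v := by
  have hsub : uIcc u v ⊆ Ici 0 := fun x hx => le_trans (le_min hu hv) hx.1
  exact ((young_a_monoIci hA).mono hsub).integrableOn_isCompact isCompact_uIcc
    |>.intervalIntegrable

lemma young_A_zero (hA : IsYoungPair a A) : A 0 = 0 := by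
  rw [hA.2.2.2.2 0 le_rfl, intervalIntegral.integral_same]

lemma young_A_add (hA : IsYoungPair a A) {s t : ℝ} (hs : 0 ≤ s) (hst : s ≤ t) :
    A t = A s + ∫ τ in s..t, a τ := by
  rw [hA.2.2.2.2 t (le_trans hs hst), hA.2.2.2.2 s hs,
    intervalIntegral.integral_add_adjacent_intervals (young_a_intInt hA le_rfl hs)
      (young_a_intInt hA hs (le_trans hs hst))]

lemma young_A_mono (hA : IsYoungPair a A) : MonotoneOn A (Ici 0) := by
  intro x hx y _ hxy
  rw [young_A_add hA hx hxy]
  have : 0 ≤ ∫ τ in x..y, a τ :=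
    intervalIntegral.integral_nonneg hxy fun u hu => young_a_nonneg hA (le_trans hx hu.1)
  linarith

lemma young_A_nonneg (hA : IsYoungPair a A) {t : ℝ} (ht : 0 ≤ t) : 0 ≤ A t := by
  have := young_A_mono hA (self_mem_Ici (a := (0:ℝ))) ht ht
  rw [young_A_zero hA] at this; exact this

lemma young_A_pos (hA : IsYoungPair a A) {t : ℝ} (ht : 0 < t) : 0 < A t := by
  have h2 : (0:ℝ) ≤ t / 2 := by linarith
  have hle : t / 2 ≤ t := by linarith
  have hkey : ∫ τ in (t/2)..t, a (t/2) ≤ ∫ τ in (t/2)..t, a τ :=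
    intervalIntegral.integral_mono_on hle intervalIntegrable_const
      (young_a_intInt hA h2 ht.le)
      (fun x hx => young_a_monoIci hA h2 (le_trans h2 hx.1) hx.1)
  rw [intervalIntegral.integral_const, smul_eq_mul] at hkey
  have hA2 : 0 < a (t/2) := hA.2.1 _ (by linarith)
  have := young_A_add hA h2 hle
  have hApos := young_A_nonneg hA h2
  nlinarith

lemma young_A_contOn (hA : IsYoungPair a A) : ContinuousOn A (Ici 0) := by
  intro x hx
  have h1 : IntegrableOn a (Icc 0 (x+1)) volume :=
    ((young_a_monoIci hA).mono Icc_subset_Ici_self).integrableOn_isCompact isCompact_Icc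
  have h2 := intervalIntegral.continuousOn_primitive (f := a) (μ := volume) (a := 0)
      (b := x+1) h1
  have h3 : ContinuousOn A (Icc 0 (x+1)) := by
    refine ContinuousOn.congr h2 fun y hy => ?_
    rw [hA.2.2.2.2 y hy.1, intervalIntegral.integral_of_le hy.1]
  have h4 : ContinuousWithinAt A (Icc 0 (x+1)) x := h3 x ⟨hx, by linarith⟩
  refine h4.mono_of_mem_nhdsWithin ?_
  have : Ici 0 ∩ Iio (x+1) ∈ 𝓝[Ici 0] x :=
    inter_mem_nhdsWithin _ (Iio_mem_nhds (by linarith))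
  exact Filter.mem_of_superset this fun y hy => ⟨hy.1, hy.2.le⟩

lemma young_A_rightDeriv (hA : IsYoungPair a A) {x : ℝ} (hx : 0 ≤ x) :
    HasDerivWithinAt A (a x) (Ici x) x := by
  have hmeas : StronglyMeasurableAtFilter a (𝓝[Ioi x] x) volume := by
    refine ⟨Icc x (x+1), ?_, ?_⟩
    · refine Filter.mem_of_superset
        (inter_mem_nhdsWithin _ (Iio_mem_nhds (by linarith : x < x + 1)))
        fun y hy => ⟨hy.1.le, hy.2.le⟩
    · exact (aemeasurable_restrict_of_monotoneOn measurableSet_Icc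
        ((young_a_monoIci hA).mono (fun y hy => le_trans hx hy.1))).aestronglyMeasurable
  have hc : ContinuousWithinAt a (Ioi x) x := (hA.2.2.1 x hx).mono Ioi_subset_Ici_self
  have key : HasDerivWithinAt (fun u => ∫ τ in (0:ℝ)..u, a τ) (a x) (Ici x) x :=
    intervalIntegral.integral_hasDerivWithinAt_right (young_a_intInt hA le_rfl hx) hmeas hc
  exact key.congr (fun y hy => hA.2.2.2.2 y (le_trans hx hy)) (hA.2.2.2.2 x hx)


lemma phi_contOn (hA : IsYoungPair a A) (p : ℝ) {s t : ℝ} (hs : 0 < s) :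
    ContinuousOn (fun x => A x / x ^ p) (Icc s t) := by
  have hsub : Icc s t ⊆ Ici 0 := fun y hy => le_trans hs.le hy.1
  refine ContinuousOn.div ((young_A_contOn hA).mono hsub) ?_ ?_
  · exact (continuousOn_id' _).rpow_const fun x hx => Or.inl (lt_of_lt_of_le hs hx.1).ne'
  · exact fun x hx => (Real.rpow_pos_of_pos (lt_of_lt_of_le hs hx.1) p).ne'

lemma phi_rightDeriv (hA : IsYoungPair a A) (p : ℝ) {x : ℝ} (hx : 0 < x) :
    HasDerivWithinAt (fun y => A y / y ^ p)
      ((a x * x ^ p - A x * (p * x ^ (p - 1))) / (x ^ p) ^ 2) (Ici x) x := by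
  refine HasDerivWithinAt.div (young_A_rightDeriv hA hx.le) ?_
    (Real.rpow_pos_of_pos hx p).ne'
  exact (Real.hasDerivAt_rpow_const (Or.inl hx.ne')).hasDerivWithinAt

lemma phi_num_pm (hA : IsYoungPair a A)
    (hδ : ∀ t, 0 < t → pm ≤ t * a t / A t ∧ t * a t / A t ≤ pp)
    {x : ℝ} (hx : 0 < x) :
    0 ≤ (a x * x ^ pm - A x * (pm * x ^ (pm - 1))) / (x ^ pm) ^ 2 := by
  have hAx := young_A_pos hA hx
  have h1 : pm * A x ≤ x * a x := by
    have := (hδ x hx).1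
    rw [le_div_iff₀ hAx] at this; linarith
  have hxp : x ^ pm = x ^ (pm - 1) * x := by
    rw [← Real.rpow_add_one hx.ne' (pm - 1)]; ring_nf
  have hpow : (0:ℝ) < x ^ (pm - 1) := Real.rpow_pos_of_pos hx _
  apply div_nonneg _ (sq_nonneg _)
  rw [hxp]; nlinarith

lemma phi_num_pp (hA : IsYoungPair a A)
    (hδ : ∀ t, 0 < t → pm ≤ t * a t / A t ∧ t * a t / A t ≤ pp)
    {x : ℝ} (hx : 0 < x) :
    (a x * x ^ pp - A x * (pp * x ^ (pp - 1))) / (x ^ pp) ^ 2 ≤ 0 := by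
  have hAx := young_A_pos hA hx
  have h1 : x * a x ≤ pp * A x := by
    have := (hδ x hx).2
    rw [div_le_iff₀ hAx] at this; linarith
  have hxp : x ^ pp = x ^ (pp - 1) * x := by
    rw [← Real.rpow_add_one hx.ne' (pp - 1)]; ring_nf
  have hpow : (0:ℝ) < x ^ (pp - 1) := Real.rpow_pos_of_pos hx _
  apply div_nonpos_of_nonpos_of_nonneg _ (sq_nonneg _)
  rw [hxp]; nlinarith

lemma phi_monoOn (hA : IsYoungPair a A)
    (hδ : ∀ t, 0 < t → pm ≤ t * a t / A t ∧ t * a t / A t ≤ pp) :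
    MonotoneOn (fun x => A x / x ^ pm) (Ioi 0) := by
  intro s hs t ht hst
  have key := image_le_of_deriv_right_le_deriv_boundary
    (f := fun _ : ℝ => A s / s ^ pm) (f' := fun _ => 0) (a := s) (b := t)
    continuousOn_const (fun x _ => (hasDerivWithinAt_const _ _ _))
    (le_refl _) (phi_contOn hA pm hs)
    (fun x hx => phi_rightDeriv hA pm (lt_of_lt_of_le hs hx.1))
    (fun x hx => phi_num_pm hA hδ (lt_of_lt_of_le hs hx.1))
  exact key ⟨hst, le_refl t⟩

lemma phi_antiOn (hA : IsYoungPair a A)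
    (hδ : ∀ t, 0 < t → pm ≤ t * a t / A t ∧ t * a t / A t ≤ pp) :
    AntitoneOn (fun x => A x / x ^ pp) (Ioi 0) := by
  intro s hs t ht hst
  have key := image_le_of_deriv_right_le_deriv_boundary
    (f := fun x => A x / x ^ pp)
    (f' := fun x => (a x * x ^ pp - A x * (pp * x ^ (pp - 1))) / (x ^ pp) ^ 2)
    (a := s) (b := t) (B := fun _ => A s / s ^ pp) (B' := fun _ => 0)
    (phi_contOn hA pp hs)
    (fun x hx => phi_rightDeriv hA pp (lt_of_lt_of_le hs hx.1))
    (le_refl _) continuousOn_const (fun x _ => (hasDerivWithinAt_const _ _ _))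
    (fun x hx => phi_num_pp hA hδ (lt_of_lt_of_le hs hx.1))
  exact key ⟨hst, le_refl t⟩

lemma A_growth_ge (hA : IsYoungPair a A)
    (hδ : ∀ t, 0 < t → pm ≤ t * a t / A t ∧ t * a t / A t ≤ pp)
    {l t : ℝ} (hl : 1 ≤ l) (ht : 0 < t) : l ^ pm * A t ≤ A (l * t) := by
  have hl0 : (0:ℝ) < l := lt_of_lt_of_le one_pos hl
  have hlt : 0 < l * t := mul_pos hl0 ht
  have h := phi_monoOn hA hδ (mem_Ioi.2 ht) (mem_Ioi.2 hlt) (le_mul_of_one_le_left ht.le hl)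
  have h1 : (0:ℝ) < t ^ pm := Real.rpow_pos_of_pos ht pm
  have h2 : (0:ℝ) < (l * t) ^ pm := Real.rpow_pos_of_pos hlt pm
  rw [div_le_div_iff₀ h1 h2] at h
  have h3 : (l * t) ^ pm = l ^ pm * t ^ pm := Real.mul_rpow hl0.le ht.le
  rw [h3] at h
  nlinarith [Real.rpow_pos_of_pos hl0 pm]

lemma A_growth_le (hA : IsYoungPair a A)
    (hδ : ∀ t, 0 < t → pm ≤ t * a t / A t ∧ t * a t / A t ≤ pp)
    {l t : ℝ} (hl : 1 ≤ l) (ht : 0 < t) : A (l * t) ≤ l ^ pp * A t := by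
  have hl0 : (0:ℝ) < l := lt_of_lt_of_le one_pos hl
  have hlt : 0 < l * t := mul_pos hl0 ht
  have h := phi_antiOn hA hδ (mem_Ioi.2 ht) (mem_Ioi.2 hlt) (le_mul_of_one_le_left ht.le hl)
  have h1 : (0:ℝ) < t ^ pp := Real.rpow_pos_of_pos ht pp
  have h2 : (0:ℝ) < (l * t) ^ pp := Real.rpow_pos_of_pos hlt pp
  rw [div_le_div_iff₀ h2 h1] at h
  have h3 : (l * t) ^ pp = l ^ pp * t ^ pp := Real.mul_rpow hl0.le ht.le
  rw [h3] at h
  nlinarith [Real.rpow_pos_of_pos hl0 pp]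


def ff (A : ℝ → ℝ) (n : ℕ) (τ : ℝ) : ℝ := (τ / A τ) ^ ((1:ℝ) / ((n:ℝ) - 1))

def Gfun (A : ℝ → ℝ) (n : ℕ) (t : ℝ) : ℝ := ∫ τ in (0:ℝ)..t, ff A n τ

lemma Hfun_eq {t : ℝ} : Hfun A n t = (Gfun A n t) ^ (((n:ℝ) - 1) / (n:ℝ)) := rfl

lemma nR (hn : 2 ≤ n) : (2:ℝ) ≤ (n:ℝ) := by exact_mod_cast hn

lemma en_pos (hn : 2 ≤ n) : 0 < (1:ℝ) / ((n:ℝ) - 1) :=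
  div_pos one_pos (by have := nR hn; linarith)

lemma ff_zero (hn : 2 ≤ n) : ff A n 0 = 0 := by
  rw [ff, zero_div, Real.zero_rpow (en_pos hn).ne']

lemma ff_nonneg (hA : IsYoungPair a A) {τ : ℝ} (hτ : 0 ≤ τ) : 0 ≤ ff A n τ :=
  Real.rpow_nonneg (div_nonneg hτ (young_A_nonneg hA hτ)) _

lemma ff_contOn (hn : 2 ≤ n) (hA : IsYoungPair a A) : ContinuousOn (ff A n) (Ioi 0) := by
  refine ContinuousOn.rpow_const ?_ (fun x hx => Or.inr (en_pos hn).le)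
  exact (continuousOn_id' _).div ((young_A_contOn hA).mono Ioi_subset_Ici_self)
    (fun x hx => (young_A_pos hA hx).ne')

lemma ff_integrableOn (hn : 2 ≤ n) (hA : IsYoungPair a A)
    (hA3 : ∃ d : ℝ, 0 < d ∧
      IntegrableOn (fun t : ℝ => (t / A t) ^ ((1:ℝ) / ((n:ℝ) - 1))) (Set.Ioc 0 d) volume)
    (T : ℝ) : IntegrableOn (ff A n) (Ioc 0 T) volume := by
  obtain ⟨d, hd, hint⟩ := hA3
  have hint' : IntegrableOn (ff A n) (Ioc 0 d) volume := hint
  rcases le_or_gt T d with h | h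
  · exact hint'.mono_set (Ioc_subset_Ioc le_rfl h)
  · have h2 : IntegrableOn (ff A n) (Icc d T) volume :=
      ((ff_contOn hn hA).mono (fun x hx => lt_of_lt_of_le hd hx.1)).integrableOn_compact
        isCompact_Icc
    have : Ioc 0 T ⊆ Ioc 0 d ∪ Icc d T := by
      intro x hx
      rcases le_or_gt x d with h' | h'
      · exact Or.inl ⟨hx.1, h'⟩
      · exact Or.inr ⟨h'.le, hx.2⟩
    exact (hint'.union h2).mono_set this

lemma ff_intInt (hn : 2 ≤ n) (hA : IsYoungPair a A)
    (hA3 : ∃ d : ℝ, 0 < d ∧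
      IntegrableOn (fun t : ℝ => (t / A t) ^ ((1:ℝ) / ((n:ℝ) - 1))) (Set.Ioc 0 d) volume)
    {u v : ℝ} (hu : 0 ≤ u) (hv : 0 ≤ v) : IntervalIntegrable (ff A n) volume u v := by
  refine IntegrableOn.intervalIntegrable ?_
  have hsub : uIcc u v ⊆ {0} ∪ Ioc 0 (max u v) := by
    intro x hx
    have h1 : 0 ≤ x := le_trans (le_min hu hv) hx.1
    rcases eq_or_lt_of_le h1 with h | h
    · exact Or.inl (by simp [← h])
    · exact Or.inr ⟨h, hx.2⟩
  refine IntegrableOn.mono_set ?_ hsub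
  refine IntegrableOn.union ?_ (ff_integrableOn hn hA hA3 _)
  simp [IntegrableOn, Measure.restrict_singleton]

lemma Gfun_zero : Gfun A n 0 = 0 := intervalIntegral.integral_same

lemma Hfun_zero (hn : 2 ≤ n) : Hfun A n 0 = 0 := by
  have : ((n:ℝ) - 1) / (n:ℝ) ≠ 0 := by
    have := nR hn
    exact ne_of_gt (div_pos (by linarith) (by linarith))
  rw [Hfun_eq, Gfun_zero, Real.zero_rpow this]

lemma Gfun_add (hn : 2 ≤ n) (hA : IsYoungPair a A)
    (hA3 : ∃ d : ℝ, 0 < d ∧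
      IntegrableOn (fun t : ℝ => (t / A t) ^ ((1:ℝ) / ((n:ℝ) - 1))) (Set.Ioc 0 d) volume)
    {s t : ℝ} (hs : 0 ≤ s) (hst : s ≤ t) :
    Gfun A n t = Gfun A n s + ∫ τ in s..t, ff A n τ := by
  rw [Gfun, Gfun, intervalIntegral.integral_add_adjacent_intervals
    (ff_intInt hn hA hA3 le_rfl hs) (ff_intInt hn hA hA3 hs (le_trans hs hst))]

lemma Gfun_nonneg (hn : 2 ≤ n) (hA : IsYoungPair a A) {t : ℝ} (ht : 0 ≤ t) :
    0 ≤ Gfun A n t :=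
  intervalIntegral.integral_nonneg ht fun u hu => ff_nonneg hA hu.1

lemma Gfun_mono (hn : 2 ≤ n) (hA : IsYoungPair a A)
    (hA3 : ∃ d : ℝ, 0 < d ∧
      IntegrableOn (fun t : ℝ => (t / A t) ^ ((1:ℝ) / ((n:ℝ) - 1))) (Set.Ioc 0 d) volume) :
    MonotoneOn (Gfun A n) (Ici 0) := by
  intro x hx y _ hxy
  rw [Gfun_add hn hA hA3 hx hxy]
  have : 0 ≤ ∫ τ in x..y, ff A n τ :=
    intervalIntegral.integral_nonneg hxy fun u hu => ff_nonneg hA (le_trans hx hu.1)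
  linarith

lemma Gfun_pos (hn : 2 ≤ n) (hA : IsYoungPair a A)
    (hA3 : ∃ d : ℝ, 0 < d ∧
      IntegrableOn (fun t : ℝ => (t / A t) ^ ((1:ℝ) / ((n:ℝ) - 1))) (Set.Ioc 0 d) volume)
    {t : ℝ} (ht : 0 < t) : 0 < Gfun A n t := by
  have h2 : (0:ℝ) < t / 2 := by linarith
  have hle : t / 2 ≤ t := by linarith
  set c : ℝ := ((t/2) / A t) ^ ((1:ℝ) / ((n:ℝ) - 1)) with hc
  have hcpos : 0 < c := Real.rpow_pos_of_pos (div_pos h2 (young_A_pos hA ht)) _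
  have hkey : ∫ τ in (t/2)..t, c ≤ ∫ τ in (t/2)..t, ff A n τ := by
    refine intervalIntegral.integral_mono_on hle intervalIntegrable_const
      (ff_intInt hn hA hA3 h2.le ht.le) (fun x hx => ?_)
    have hx0 : 0 < x := lt_of_lt_of_le h2 hx.1
    refine Real.rpow_le_rpow (div_nonneg h2.le (young_A_pos hA ht).le) ?_ (en_pos hn).le
    have hAx : 0 < A x := young_A_pos hA hx0
    have hAxt : A x ≤ A t := young_A_mono hA hx0.le ht.le hx.2
    exact div_le_div₀ hx0.le hx.1 hAx hAxt
  rw [intervalIntegral.integral_const, smul_eq_mul] at hkey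
  have hG := Gfun_add hn hA hA3 h2.le hle
  have hG0 := Gfun_nonneg hn hA (t := t/2) h2.le
  nlinarith

lemma ff_scale_le (hn : 2 ≤ n) (hA : IsYoungPair a A)
    (hδ : ∀ t, 0 < t → pm ≤ t * a t / A t ∧ t * a t / A t ≤ pp)
    {l σ : ℝ} (hl : 1 ≤ l) (hσ : 0 ≤ σ) :
    ff A n (l * σ) ≤ l ^ ((1 - pm) * ((1:ℝ) / ((n:ℝ) - 1))) * ff A n σ := by
  have hl0 : (0:ℝ) < l := lt_of_lt_of_le one_pos hl
  rcases eq_or_lt_of_le hσ with h | h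
  · rw [← h, mul_zero, ff_zero hn]
    simp
  · have hAσ := young_A_pos hA h
    have hgrow := A_growth_ge hA hδ hl h
    have hAlσ : 0 < A (l * σ) := young_A_pos hA (mul_pos hl0 h)
    have hpow : (0:ℝ) < l ^ pm * A σ := mul_pos (Real.rpow_pos_of_pos hl0 pm) hAσ
    have key : l * σ / A (l * σ) ≤ l ^ (1 - pm) * (σ / A σ) := by
      have h1 : l * σ / A (l * σ) ≤ l * σ / (l ^ pm * A σ) :=
        div_le_div_of_nonneg_left (by positivity) hpow hgrow
      refine h1.trans (le_of_eq ?_)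
      rw [Real.rpow_sub hl0, Real.rpow_one]
      field_simp
    calc ff A n (l * σ) ≤ (l ^ (1 - pm) * (σ / A σ)) ^ ((1:ℝ) / ((n:ℝ) - 1)) :=
          Real.rpow_le_rpow (by positivity) key (en_pos hn).le
      _ = l ^ ((1 - pm) * ((1:ℝ) / ((n:ℝ) - 1))) * ff A n σ := by
          rw [Real.mul_rpow (by positivity) (by positivity), ff, Real.rpow_mul hl0.le]

lemma ff_scale_ge (hn : 2 ≤ n) (hA : IsYoungPair a A)
    (hδ : ∀ t, 0 < t → pm ≤ t * a t / A t ∧ t * a t / A t ≤ pp)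
    {l σ : ℝ} (hl : 1 ≤ l) (hσ : 0 ≤ σ) :
    l ^ ((1 - pp) * ((1:ℝ) / ((n:ℝ) - 1))) * ff A n σ ≤ ff A n (l * σ) := by
  have hl0 : (0:ℝ) < l := lt_of_lt_of_le one_pos hl
  rcases eq_or_lt_of_le hσ with h | h
  · rw [← h, mul_zero, ff_zero hn]
    simp
  · have hAσ := young_A_pos hA h
    have hgrow := A_growth_le hA hδ hl h
    have hAlσ : 0 < A (l * σ) := young_A_pos hA (mul_pos hl0 h)
    have key : l ^ (1 - pp) * (σ / A σ) ≤ l * σ / A (l * σ) := by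
      have h1 : l * σ / (l ^ pp * A σ) ≤ l * σ / A (l * σ) :=
        div_le_div_of_nonneg_left (by positivity) hAlσ hgrow
      refine (le_of_eq ?_).trans h1
      rw [Real.rpow_sub hl0, Real.rpow_one]
      field_simp
    calc l ^ ((1 - pp) * ((1:ℝ) / ((n:ℝ) - 1))) * ff A n σ
        = (l ^ (1 - pp) * (σ / A σ)) ^ ((1:ℝ) / ((n:ℝ) - 1)) := by
          rw [Real.mul_rpow (by positivity) (by positivity), ff, Real.rpow_mul hl0.le]
      _ ≤ ff A n (l * σ) := Real.rpow_le_rpow (by positivity) key (en_pos hn).le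

lemma Gfun_comp_eq {l : ℝ} (hl0 : 0 < l) (t : ℝ) :
    Gfun A n (l * t) = l * ∫ σ in (0:ℝ)..t, ff A n (l * σ) := by
  rw [Gfun, intervalIntegral.integral_comp_mul_left _ hl0.ne', mul_zero, smul_eq_mul]
  field_simp

lemma Gfun_scale_le (hn : 2 ≤ n) (hA : IsYoungPair a A)
    (hδ : ∀ t, 0 < t → pm ≤ t * a t / A t ∧ t * a t / A t ≤ pp)
    (hA3 : ∃ d : ℝ, 0 < d ∧
      IntegrableOn (fun t : ℝ => (t / A t) ^ ((1:ℝ) / ((n:ℝ) - 1))) (Set.Ioc 0 d) volume)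
    {l t : ℝ} (hl : 1 ≤ l) (ht : 0 ≤ t) :
    Gfun A n (l * t) ≤ l ^ (((n:ℝ) - pm) / ((n:ℝ) - 1)) * Gfun A n t := by
  have hl0 : (0:ℝ) < l := lt_of_lt_of_le one_pos hl
  have hn1 : (1:ℝ) ≤ (n:ℝ) - 1 := by have := nR hn; linarith
  have hIl : IntervalIntegrable (fun σ => ff A n (l * σ)) volume 0 t := by
    have := (ff_intInt hn hA hA3 le_rfl (by positivity : (0:ℝ) ≤ l * t)).comp_mul_left (c := l)
    simpa [zero_div, mul_div_cancel_left₀ _ hl0.ne'] using this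
  have hIr : IntervalIntegrable
      (fun σ => l ^ ((1 - pm) * ((1:ℝ) / ((n:ℝ) - 1))) * ff A n σ) volume 0 t :=
    (ff_intInt hn hA hA3 le_rfl ht).const_mul _
  have hmono : ∫ σ in (0:ℝ)..t, ff A n (l * σ)
      ≤ ∫ σ in (0:ℝ)..t, l ^ ((1 - pm) * ((1:ℝ) / ((n:ℝ) - 1))) * ff A n σ :=
    intervalIntegral.integral_mono_on ht hIl hIr
      (fun x hx => ff_scale_le hn hA hδ hl hx.1)
  rw [intervalIntegral.integral_const_mul] at hmono
  have heq : l * (l ^ ((1 - pm) * ((1:ℝ) / ((n:ℝ) - 1)))) = l ^ (((n:ℝ) - pm) / ((n:ℝ) - 1)) := by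
    rw [show ((n:ℝ) - pm) / ((n:ℝ) - 1) = 1 + (1 - pm) * ((1:ℝ) / ((n:ℝ) - 1)) by
      field_simp; ring]
    rw [Real.rpow_add hl0, Real.rpow_one]
  calc Gfun A n (l * t) = l * ∫ σ in (0:ℝ)..t, ff A n (l * σ) := Gfun_comp_eq hl0 t
    _ ≤ l * (l ^ ((1 - pm) * ((1:ℝ) / ((n:ℝ) - 1))) * Gfun A n t) := by
        exact mul_le_mul_of_nonneg_left hmono hl0.le
    _ = l ^ (((n:ℝ) - pm) / ((n:ℝ) - 1)) * Gfun A n t := by rw [← heq]; ring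

lemma Gfun_scale_ge (hn : 2 ≤ n) (hA : IsYoungPair a A)
    (hδ : ∀ t, 0 < t → pm ≤ t * a t / A t ∧ t * a t / A t ≤ pp)
    (hA3 : ∃ d : ℝ, 0 < d ∧
      IntegrableOn (fun t : ℝ => (t / A t) ^ ((1:ℝ) / ((n:ℝ) - 1))) (Set.Ioc 0 d) volume)
    {l t : ℝ} (hl : 1 ≤ l) (ht : 0 ≤ t) :
    l ^ (((n:ℝ) - pp) / ((n:ℝ) - 1)) * Gfun A n t ≤ Gfun A n (l * t) := by
  have hl0 : (0:ℝ) < l := lt_of_lt_of_le one_pos hl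
  have hIl : IntervalIntegrable (fun σ => ff A n (l * σ)) volume 0 t := by
    have := (ff_intInt hn hA hA3 le_rfl (by positivity : (0:ℝ) ≤ l * t)).comp_mul_left (c := l)
    simpa [zero_div, mul_div_cancel_left₀ _ hl0.ne'] using this
  have hIr : IntervalIntegrable
      (fun σ => l ^ ((1 - pp) * ((1:ℝ) / ((n:ℝ) - 1))) * ff A n σ) volume 0 t :=
    (ff_intInt hn hA hA3 le_rfl ht).const_mul _
  have hmono : ∫ σ in (0:ℝ)..t, l ^ ((1 - pp) * ((1:ℝ) / ((n:ℝ) - 1))) * ff A n σ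
      ≤ ∫ σ in (0:ℝ)..t, ff A n (l * σ) :=
    intervalIntegral.integral_mono_on ht hIr hIl
      (fun x hx => ff_scale_ge hn hA hδ hl hx.1)
  rw [intervalIntegral.integral_const_mul] at hmono
  have heq : l * (l ^ ((1 - pp) * ((1:ℝ) / ((n:ℝ) - 1)))) = l ^ (((n:ℝ) - pp) / ((n:ℝ) - 1)) := by
    have hn1 : (1:ℝ) ≤ (n:ℝ) - 1 := by have := nR hn; linarith
    rw [show ((n:ℝ) - pp) / ((n:ℝ) - 1) = 1 + (1 - pp) * ((1:ℝ) / ((n:ℝ) - 1)) by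
      field_simp; ring]
    rw [Real.rpow_add hl0, Real.rpow_one]
  calc l ^ (((n:ℝ) - pp) / ((n:ℝ) - 1)) * Gfun A n t
      = l * (l ^ ((1 - pp) * ((1:ℝ) / ((n:ℝ) - 1))) * Gfun A n t) := by rw [← heq]; ring
    _ ≤ l * ∫ σ in (0:ℝ)..t, ff A n (l * σ) := by
        exact mul_le_mul_of_nonneg_left hmono hl0.le
    _ = Gfun A n (l * t) := (Gfun_comp_eq hl0 t).symm

lemma theta_pos (hn : 2 ≤ n) : 0 < ((n:ℝ) - 1) / (n:ℝ) := by
  have := nR hn; exact div_pos (by linarith) (by linarith)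

lemma Hfun_nonneg (hn : 2 ≤ n) (hA : IsYoungPair a A) {t : ℝ} (ht : 0 ≤ t) :
    0 ≤ Hfun A n t :=
  Real.rpow_nonneg (Gfun_nonneg hn hA ht) _

lemma Hfun_scale_le (hn : 2 ≤ n) (hA : IsYoungPair a A)
    (hδ : ∀ t, 0 < t → pm ≤ t * a t / A t ∧ t * a t / A t ≤ pp)
    (hA3 : ∃ d : ℝ, 0 < d ∧
      IntegrableOn (fun t : ℝ => (t / A t) ^ ((1:ℝ) / ((n:ℝ) - 1))) (Set.Ioc 0 d) volume)
    {l t : ℝ} (hl : 1 ≤ l) (ht : 0 ≤ t) :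
    Hfun A n (l * t) ≤ l ^ (((n:ℝ) - pm) / (n:ℝ)) * Hfun A n t := by
  have hl0 : (0:ℝ) < l := lt_of_lt_of_le one_pos hl
  have hn0 : (0:ℝ) < (n:ℝ) := by have := nR hn; linarith
  have hn1 : (0:ℝ) < (n:ℝ) - 1 := by have := nR hn; linarith
  calc Hfun A n (l * t)
      ≤ (l ^ (((n:ℝ) - pm) / ((n:ℝ) - 1)) * Gfun A n t) ^ (((n:ℝ) - 1) / (n:ℝ)) := by
        rw [Hfun_eq]
        exact Real.rpow_le_rpow (Gfun_nonneg hn hA (by positivity))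
          (Gfun_scale_le hn hA hδ hA3 hl ht) (theta_pos hn).le
    _ = l ^ (((n:ℝ) - pm) / (n:ℝ)) * Hfun A n t := by
        rw [Real.mul_rpow (by positivity) (Gfun_nonneg hn hA ht), Hfun_eq,
          ← Real.rpow_mul hl0.le]
        congr 2
        field_simp

lemma Hfun_scale_ge (hn : 2 ≤ n) (hA : IsYoungPair a A)
    (hδ : ∀ t, 0 < t → pm ≤ t * a t / A t ∧ t * a t / A t ≤ pp)
    (hA3 : ∃ d : ℝ, 0 < d ∧
      IntegrableOn (fun t : ℝ => (t / A t) ^ ((1:ℝ) / ((n:ℝ) - 1))) (Set.Ioc 0 d) volume)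
    {l t : ℝ} (hl : 1 ≤ l) (ht : 0 ≤ t) :
    l ^ (((n:ℝ) - pp) / (n:ℝ)) * Hfun A n t ≤ Hfun A n (l * t) := by
  have hl0 : (0:ℝ) < l := lt_of_lt_of_le one_pos hl
  have hn0 : (0:ℝ) < (n:ℝ) := by have := nR hn; linarith
  have hn1 : (0:ℝ) < (n:ℝ) - 1 := by have := nR hn; linarith
  calc l ^ (((n:ℝ) - pp) / (n:ℝ)) * Hfun A n t
      = (l ^ (((n:ℝ) - pp) / ((n:ℝ) - 1)) * Gfun A n t) ^ (((n:ℝ) - 1) / (n:ℝ)) := by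
        rw [Real.mul_rpow (by positivity) (Gfun_nonneg hn hA ht), Hfun_eq,
          ← Real.rpow_mul hl0.le]
        congr 2
        field_simp
    _ ≤ Hfun A n (l * t) := by
        rw [Hfun_eq]
        exact Real.rpow_le_rpow
          (mul_nonneg (by positivity) (Gfun_nonneg hn hA ht))
          (Gfun_scale_ge hn hA hδ hA3 hl ht) (theta_pos hn).le

lemma Gfun_contOn (hn : 2 ≤ n) (hA : IsYoungPair a A)
    (hA3 : ∃ d : ℝ, 0 < d ∧
      IntegrableOn (fun t : ℝ => (t / A t) ^ ((1:ℝ) / ((n:ℝ) - 1))) (Set.Ioc 0 d) volume) :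
    ContinuousOn (Gfun A n) (Ici 0) := by
  intro x hx
  have h1 : IntegrableOn (ff A n) (Icc 0 (x+1)) volume := by
    have hsub : Icc 0 (x+1) ⊆ {0} ∪ Ioc 0 (x+1) := by
      intro y hy
      rcases eq_or_lt_of_le hy.1 with h | h
      · exact Or.inl (by simp [← h])
      · exact Or.inr ⟨h, hy.2⟩
    refine IntegrableOn.mono_set (IntegrableOn.union ?_ (ff_integrableOn hn hA hA3 _)) hsub
    simp [IntegrableOn, Measure.restrict_singleton]
  have h2 := intervalIntegral.continuousOn_primitive (f := ff A n) (μ := volume) (a := 0)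
      (b := x+1) h1
  have h3 : ContinuousOn (Gfun A n) (Icc 0 (x+1)) := by
    refine ContinuousOn.congr h2 fun y hy => ?_
    rw [Gfun, intervalIntegral.integral_of_le hy.1]
  have h4 : ContinuousWithinAt (Gfun A n) (Icc 0 (x+1)) x := h3 x ⟨hx, by linarith⟩
  refine h4.mono_of_mem_nhdsWithin ?_
  have : Ici 0 ∩ Iio (x+1) ∈ 𝓝[Ici 0] x :=
    inter_mem_nhdsWithin _ (Iio_mem_nhds (by linarith))
  exact Filter.mem_of_superset this fun y hy => ⟨hy.1, hy.2.le⟩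

lemma Hfun_contOn (hn : 2 ≤ n) (hA : IsYoungPair a A)
    (hA3 : ∃ d : ℝ, 0 < d ∧
      IntegrableOn (fun t : ℝ => (t / A t) ^ ((1:ℝ) / ((n:ℝ) - 1))) (Set.Ioc 0 d) volume) :
    ContinuousOn (Hfun A n) (Ici 0) :=
  (Gfun_contOn hn hA hA3).rpow_const fun x _ => Or.inr (theta_pos hn).le

lemma Gfun_unbounded (hn : 2 ≤ n) (hA : IsYoungPair a A)
    (hA2 : ∃ K : ℝ, 0 < K ∧
      ¬ IntegrableOn (fun t : ℝ => (t / A t) ^ ((1:ℝ) / ((n:ℝ) - 1))) (Set.Ioi K) volume)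
    (hA3 : ∃ d : ℝ, 0 < d ∧
      IntegrableOn (fun t : ℝ => (t / A t) ^ ((1:ℝ) / ((n:ℝ) - 1))) (Set.Ioc 0 d) volume)
    (C : ℝ) : ∃ T, 0 ≤ T ∧ C ≤ Gfun A n T := by
  obtain ⟨K, hK, hKni⟩ := hA2
  by_contra hcon
  push_neg at hcon
  have hKni' : ¬ IntegrableOn (ff A n) (Ioi K) volume := hKni
  apply hKni'
  have hfi : ∀ i : ℝ, IntegrableOn (ff A n) (Ioc K i) volume := fun i =>
    (ff_integrableOn hn hA hA3 i).mono_set (Ioc_subset_Ioc hK.le le_rfl)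
  refine integrableOn_Ioi_of_intervalIntegral_norm_bounded C K hfi tendsto_id ?_
  filter_upwards [eventually_ge_atTop K] with i hi
  have hnormeq : ∫ x in K..i, ‖ff A n x‖ = ∫ x in K..i, ff A n x := by
    refine intervalIntegral.integral_congr fun x hx => ?_
    have hx0 : 0 ≤ x := by
      have : min K i ≤ x := hx.1
      rw [min_eq_left hi] at this
      linarith
    rw [Real.norm_eq_abs, abs_of_nonneg (ff_nonneg hA hx0)]
  rw [hnormeq]
  have hadd := Gfun_add hn hA hA3 hK.le hi
  have hGK := Gfun_nonneg hn hA hK.le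
  have hGi := (hcon i (le_trans hK.le hi)).le
  linarith

lemma Hfun_surjOn (hn : 2 ≤ n) (hA : IsYoungPair a A)
    (hA2 : ∃ K : ℝ, 0 < K ∧
      ¬ IntegrableOn (fun t : ℝ => (t / A t) ^ ((1:ℝ) / ((n:ℝ) - 1))) (Set.Ioi K) volume)
    (hA3 : ∃ d : ℝ, 0 < d ∧
      IntegrableOn (fun t : ℝ => (t / A t) ^ ((1:ℝ) / ((n:ℝ) - 1))) (Set.Ioc 0 d) volume)
    {s : ℝ} (hs : 0 ≤ s) : ∃ u, 0 ≤ u ∧ Hfun A n u = s := by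
  set θ : ℝ := ((n:ℝ) - 1) / (n:ℝ) with hθ
  have hθpos := theta_pos hn
  obtain ⟨T, hT0, hTC⟩ := Gfun_unbounded hn hA hA2 hA3 (s ^ (1/θ))
  have hHT : s ≤ Hfun A n T := by
    have h1 : (s ^ (1/θ)) ^ θ ≤ (Gfun A n T) ^ θ :=
      Real.rpow_le_rpow (Real.rpow_nonneg hs _) hTC hθpos.le
    rwa [← Real.rpow_mul hs, one_div, inv_mul_cancel₀ hθpos.ne', Real.rpow_one] at h1
  have hIVT := intermediate_value_Icc hT0 ((Hfun_contOn hn hA hA3).mono Icc_subset_Ici_self)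
  have hmem : s ∈ Icc (Hfun A n 0) (Hfun A n T) := by
    rw [Hfun_zero hn]; exact ⟨hs, hHT⟩
  obtain ⟨u, hu, hus⟩ := hIVT hmem
  exact ⟨u, hu.1, hus⟩


section Hinv
variable {Hinv : ℝ → ℝ}
variable (hn : 2 ≤ n) (hA : IsYoungPair a A)
  (hA2 : ∃ K : ℝ, 0 < K ∧
      ¬ IntegrableOn (fun t : ℝ => (t / A t) ^ ((1:ℝ) / ((n:ℝ) - 1))) (Set.Ioi K) volume)
  (hA3 : ∃ d : ℝ, 0 < d ∧
      IntegrableOn (fun t : ℝ => (t / A t) ^ ((1:ℝ) / ((n:ℝ) - 1))) (Set.Ioc 0 d) volume)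
  (hδ : ∀ t, 0 < t → pm ≤ t * a t / A t ∧ t * a t / A t ≤ pp)
  (hHmono : StrictMonoOn (Hfun A n) (Set.Ici 0))
  (hHinv₁ : ∀ t, 0 ≤ t → Hinv (Hfun A n t) = t)
  (hHinv₂ : ∀ s, 0 ≤ s → Hfun A n (Hinv s) = s)
include hn hA hA2 hA3 hHinv₁

lemma Hinv_nonneg {s : ℝ} (hs : 0 ≤ s) : 0 ≤ Hinv s := by
  obtain ⟨u, hu, hus⟩ := Hfun_surjOn hn hA hA2 hA3 hs
  rw [← hus, hHinv₁ u hu]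
  exact hu

include hHinv₂ in
lemma Hinv_pos {s : ℝ} (hs : 0 < s) : 0 < Hinv s := by
  rcases eq_or_lt_of_le (Hinv_nonneg hn hA hA2 hA3 hHinv₁ hs.le) with h | h
  · exfalso
    have := hHinv₂ s hs.le
    rw [← h, Hfun_zero hn] at this
    exact hs.ne this
  · exact h

include hδ hHmono hHinv₂ in
lemma Hinv_scale_ge (hpmn : pm < (n:ℝ)) {r s : ℝ} (hr : 1 ≤ r) (hs : 0 ≤ s) :
    r ^ ((n:ℝ) / ((n:ℝ) - pm)) * Hinv s ≤ Hinv (r * s) := by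
  have hn0 : (0:ℝ) < (n:ℝ) := by have := nR hn; linarith
  have hnm : (0:ℝ) < (n:ℝ) - pm := by linarith
  set u := Hinv s with hu
  have hu0 : 0 ≤ u := Hinv_nonneg hn hA hA2 hA3 hHinv₁ hs
  set l := r ^ ((n:ℝ) / ((n:ℝ) - pm)) with hldef
  have hl : 1 ≤ l := Real.one_le_rpow hr (div_pos hn0 hnm).le
  have hrs0 : 0 ≤ r * s := mul_nonneg (by linarith) hs
  have hkey : Hfun A n (l * u) ≤ Hfun A n (Hinv (r * s)) := by
    rw [hHinv₂ (r * s) hrs0]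
    calc Hfun A n (l * u) ≤ l ^ (((n:ℝ) - pm) / (n:ℝ)) * Hfun A n u :=
          Hfun_scale_le hn hA hδ hA3 hl hu0
      _ = r * s := by
          rw [hldef, ← Real.rpow_mul (by linarith : (0:ℝ) ≤ r),
            show (n:ℝ) / ((n:ℝ) - pm) * (((n:ℝ) - pm) / (n:ℝ)) = 1 by field_simp,
            Real.rpow_one, hHinv₂ s hs]
  have h1 : 0 ≤ l * u := mul_nonneg (by linarith) hu0
  have h2 : 0 ≤ Hinv (r * s) := Hinv_nonneg hn hA hA2 hA3 hHinv₁ hrs0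
  exact (hHmono.le_iff_le h1 h2).mp hkey

include hδ hHmono hHinv₂ in
lemma Hinv_scale_le (hppn : pp < (n:ℝ)) {r s : ℝ} (hr : 1 ≤ r) (hs : 0 ≤ s) :
    Hinv (r * s) ≤ r ^ ((n:ℝ) / ((n:ℝ) - pp)) * Hinv s := by
  have hn0 : (0:ℝ) < (n:ℝ) := by have := nR hn; linarith
  have hnm : (0:ℝ) < (n:ℝ) - pp := by linarith
  set u := Hinv s with hu
  have hu0 : 0 ≤ u := Hinv_nonneg hn hA hA2 hA3 hHinv₁ hs
  set l := r ^ ((n:ℝ) / ((n:ℝ) - pp)) with hldef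
  have hl : 1 ≤ l := Real.one_le_rpow hr (div_pos hn0 hnm).le
  have hrs0 : 0 ≤ r * s := mul_nonneg (by linarith) hs
  have hkey : Hfun A n (Hinv (r * s)) ≤ Hfun A n (l * u) := by
    rw [hHinv₂ (r * s) hrs0]
    calc r * s = l ^ (((n:ℝ) - pp) / (n:ℝ)) * Hfun A n u := by
          rw [hldef, ← Real.rpow_mul (by linarith : (0:ℝ) ≤ r),
            show (n:ℝ) / ((n:ℝ) - pp) * (((n:ℝ) - pp) / (n:ℝ)) = 1 by field_simp,
            Real.rpow_one, hHinv₂ s hs]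
      _ ≤ Hfun A n (l * u) := Hfun_scale_ge hn hA hδ hA3 hl hu0
  have h1 : 0 ≤ l * u := mul_nonneg (by linarith) hu0
  have h2 : 0 ≤ Hinv (r * s) := Hinv_nonneg hn hA hA2 hA3 hHinv₁ hrs0
  exact (hHmono.le_iff_le h2 h1).mp hkey

include hHinv₂ in
lemma Bn_zero : A (Hinv 0) = 0 := by
  have h := hHinv₁ 0 le_rfl
  rw [Hfun_zero hn] at h
  rw [h, young_A_zero hA]

include hHinv₂ in
lemma Bn_pos {s : ℝ} (hs : 0 < s) : 0 < A (Hinv s) :=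
  young_A_pos hA (Hinv_pos hn hA hA2 hA3 hHinv₁ hHinv₂ hs)

include hδ hHmono hHinv₂ in
lemma Bn_ratio_ge (hpmn : pm < (n:ℝ)) {t s : ℝ} (ht : 1 ≤ t) (hs : 0 < s) :
    t ^ ((n:ℝ) * pm / ((n:ℝ) - pm)) * A (Hinv s) ≤ A (Hinv (s * t)) := by
  have hn0 : (0:ℝ) < (n:ℝ) := by have := nR hn; linarith
  have hnm : (0:ℝ) < (n:ℝ) - pm := by linarith
  set u := Hinv s with hu
  have hu0 : 0 < u := Hinv_pos hn hA hA2 hA3 hHinv₁ hHinv₂ hs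
  set l := t ^ ((n:ℝ) / ((n:ℝ) - pm)) with hldef
  have hl : 1 ≤ l := Real.one_le_rpow ht (div_pos hn0 hnm).le
  have hscale : l * u ≤ Hinv (s * t) := by
    rw [mul_comm s t]
    exact Hinv_scale_ge hn hA hA2 hA3 hδ hHmono hHinv₁ hHinv₂ hpmn ht hs.le
  have hmono : A (l * u) ≤ A (Hinv (s * t)) := by
    refine young_A_mono hA ?_ ?_ hscale
    · exact mem_Ici.2 (by positivity)
    · exact mem_Ici.2 (le_trans (by positivity) hscale)
  have hgrow : l ^ pm * A u ≤ A (l * u) := A_growth_ge hA hδ hl hu0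
  have hexp : l ^ pm = t ^ ((n:ℝ) * pm / ((n:ℝ) - pm)) := by
    rw [hldef, ← Real.rpow_mul (by linarith : (0:ℝ) ≤ t)]
    congr 1
    field_simp
  rw [hexp] at hgrow
  linarith

include hδ hHmono hHinv₂ in
lemma Bn_ratio_le (hppn : pp < (n:ℝ)) {t s : ℝ} (ht : 1 ≤ t) (hs : 0 < s) :
    A (Hinv (s * t)) ≤ t ^ ((n:ℝ) * pp / ((n:ℝ) - pp)) * A (Hinv s) := by
  have hn0 : (0:ℝ) < (n:ℝ) := by have := nR hn; linarith
  have hnm : (0:ℝ) < (n:ℝ) - pp := by linarith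
  set u := Hinv s with hu
  have hu0 : 0 < u := Hinv_pos hn hA hA2 hA3 hHinv₁ hHinv₂ hs
  set l := t ^ ((n:ℝ) / ((n:ℝ) - pp)) with hldef
  have hl : 1 ≤ l := Real.one_le_rpow ht (div_pos hn0 hnm).le
  have hscale : Hinv (s * t) ≤ l * u := by
    rw [mul_comm s t]
    exact Hinv_scale_le hn hA hA2 hA3 hδ hHmono hHinv₁ hHinv₂ hppn ht hs.le
  have hst0 : (0:ℝ) < s * t := by positivity
  have hmono : A (Hinv (s * t)) ≤ A (l * u) := by
    refine young_A_mono hA ?_ ?_ hscale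
    · exact mem_Ici.2 (Hinv_nonneg hn hA hA2 hA3 hHinv₁ hst0.le)
    · exact mem_Ici.2 (by positivity)
  have hgrow : A (l * u) ≤ l ^ pp * A u := A_growth_le hA hδ hl hu0
  have hexp : l ^ pp = t ^ ((n:ℝ) * pp / ((n:ℝ) - pp)) := by
    rw [hldef, ← Real.rpow_mul (by linarith : (0:ℝ) ≤ t)]
    congr 1
    field_simp
  rw [hexp] at hgrow
  linarith

include hδ hHmono hHinv₂ in
lemma Bn_ratio_small (hpmn : pm < (n:ℝ)) {t s : ℝ} (ht0 : 0 < t) (ht : t ≤ 1) (hs : 0 < s) :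
    A (Hinv (s * t)) ≤ t ^ ((n:ℝ) * pm / ((n:ℝ) - pm)) * A (Hinv s) := by
  set q := (n:ℝ) * pm / ((n:ℝ) - pm) with hq
  have hinv1 : 1 ≤ 1 / t := by rw [le_div_iff₀ ht0]; linarith
  have hst : 0 < s * t := by positivity
  have key := Bn_ratio_ge hn hA hA2 hA3 hδ hHmono hHinv₁ hHinv₂ hpmn hinv1 hst
  rw [show s * t * (1 / t) = s by field_simp] at key
  have hpow : (1/t) ^ q = (t ^ q)⁻¹ := by
    rw [one_div, Real.inv_rpow ht0.le]
  rw [hpow] at key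
  have htq : 0 < t ^ q := Real.rpow_pos_of_pos ht0 _
  calc A (Hinv (s * t)) = t ^ q * ((t ^ q)⁻¹ * A (Hinv (s * t))) := by
        field_simp
    _ ≤ t ^ q * A (Hinv s) := by
        apply mul_le_mul_of_nonneg_left key htq.le

include hHinv₂ in
lemma matus_Bn_zero : matus (fun s => A (Hinv s)) 0 = 0 := by
  have h : (fun s => A (Hinv (s * 0)) / A (Hinv s)) = fun _ => (0:ℝ) := by
    funext s
    rw [mul_zero, Bn_zero hn hA hA2 hA3 hHinv₁ hHinv₂, zero_div]
  rw [matus, h, Filter.limsup_const]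

include hδ hHmono hHinv₂ in
lemma matus_Bn_ge (hpmn : pm < (n:ℝ)) (hppn : pp < (n:ℝ)) {t : ℝ} (ht : 1 ≤ t) :
    t ^ ((n:ℝ) * pm / ((n:ℝ) - pm)) ≤ matus (fun s => A (Hinv s)) t := by
  rw [matus]
  refine Filter.le_limsup_of_frequently_le ?_ ?_
  · refine Filter.Eventually.frequently ?_
    filter_upwards [eventually_gt_atTop (0:ℝ)] with s hs
    rw [le_div_iff₀ (Bn_pos hn hA hA2 hA3 hHinv₁ hHinv₂ hs)]
    exact Bn_ratio_ge hn hA hA2 hA3 hδ hHmono hHinv₁ hHinv₂ hpmn ht hs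
  · refine isBoundedUnder_of_eventually_le (a := t ^ ((n:ℝ) * pp / ((n:ℝ) - pp))) ?_
    filter_upwards [eventually_gt_atTop (0:ℝ)] with s hs
    rw [div_le_iff₀ (Bn_pos hn hA hA2 hA3 hHinv₁ hHinv₂ hs)]
    exact Bn_ratio_le hn hA hA2 hA3 hδ hHmono hHinv₁ hHinv₂ hppn ht hs

include hδ hHmono hHinv₂ in
lemma matus_Bn_le_small (hpmn : pm < (n:ℝ)) {t : ℝ} (ht0 : 0 < t) (ht : t ≤ 1) :
    matus (fun s => A (Hinv s)) t ≤ t ^ ((n:ℝ) * pm / ((n:ℝ) - pm)) := by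
  rw [matus]
  refine Filter.limsup_le_of_le ?_ ?_
  · refine Filter.isCoboundedUnder_le_of_eventually_le (atTop : Filter ℝ) (x := 0) ?_
    filter_upwards [eventually_gt_atTop (0:ℝ)] with s hs
    refine div_nonneg (young_A_nonneg hA ?_) (young_A_nonneg hA ?_)
    · exact Hinv_nonneg hn hA hA2 hA3 hHinv₁ (by positivity)
    · exact Hinv_nonneg hn hA hA2 hA3 hHinv₁ hs.le
  · filter_upwards [eventually_gt_atTop (0:ℝ)] with s hs
    rw [div_le_iff₀ (Bn_pos hn hA hA2 hA3 hHinv₁ hHinv₂ hs)]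
    exact Bn_ratio_small hn hA hA2 hA3 hδ hHmono hHinv₁ hHinv₂ hpmn ht0 ht hs
end Hinv


variable {α : Type*} [MeasurableSpace α]

lemma lux_integral_eq (B : ℝ → ℝ) (hB0 : B 0 = 0) (κ : Measure α) {U : Set α}
    (hU : MeasurableSet U) (l : ℝ) :
    ∫ x, B (|U.indicator (fun _ => (1:ℝ)) x| / l) ∂κ = (κ U).toReal * B (1/l) := by
  have h : (fun x => B (|U.indicator (fun _ => (1:ℝ)) x| / l))
      = U.indicator (fun _ => B (1/l)) := by
    funext x
    by_cases hx : x ∈ U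
    · simp [indicator_of_mem hx, abs_one, one_div]
    · simp [indicator_of_notMem hx, hB0]
  rw [h, integral_indicator_const _ hU, smul_eq_mul]; rfl

lemma luxNorm_indicator_eq (B : ℝ → ℝ) (hB0 : B 0 = 0) (κ : Measure α) {U : Set α}
    (hU : MeasurableSet U) :
    luxNorm B κ (U.indicator fun _ => (1:ℝ))
      = sInf {l : ℝ | 0 < l ∧ (κ U).toReal * B (1/l) ≤ 1} := by
  rw [luxNorm]
  congr 1
  ext l
  simp only [mem_setOf_eq]
  rw [lux_integral_eq B hB0 κ hU l]

lemma luxNorm_Aoo_le {pm pp : ℝ} (hpm : 0 < pm) (hpp : 0 < pp) (κ : Measure α)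
    {U : Set α} (hU : MeasurableSet U) :
    luxNorm (fun t => max (t ^ pp) (t ^ pm)) κ (U.indicator fun _ => (1:ℝ))
      ≤ max ((κ U).toReal ^ (1/pp)) ((κ U).toReal ^ (1/pm)) := by
  have hB0 : max ((0:ℝ) ^ pp) ((0:ℝ) ^ pm) = 0 := by
    rw [Real.zero_rpow hpp.ne', Real.zero_rpow hpm.ne', max_self]
  rw [luxNorm_indicator_eq _ hB0 κ hU]
  set m := (κ U).toReal with hm
  have hm0 : 0 ≤ m := ENNReal.toReal_nonneg
  rcases eq_or_lt_of_le hm0 with h0 | h0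
  · have hset : {l : ℝ | 0 < l ∧ m * max ((1/l) ^ pp) ((1/l) ^ pm) ≤ 1} = Ioi 0 := by
      ext l
      simp only [mem_setOf_eq, mem_Ioi, ← h0, zero_mul]
      exact ⟨fun h => h.1, fun h => ⟨h, by norm_num⟩⟩
    rw [hset, csInf_Ioi, ← h0, Real.zero_rpow (by positivity : (1:ℝ)/pp ≠ 0)]
    exact le_max_left _ _
  · set l₀ := max (m ^ (1/pp)) (m ^ (1/pm)) with hl₀
    have hl₀pos : 0 < l₀ := lt_max_of_lt_left (Real.rpow_pos_of_pos h0 _)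
    refine csInf_le ⟨0, fun x hx => hx.1.le⟩ ?_
    refine ⟨hl₀pos, ?_⟩
    have hpow : ∀ p : ℝ, 0 < p → m ^ (1/p) ≤ l₀ → m * (1/l₀) ^ p ≤ 1 := by
      intro p hp hle
      have h1 : m ≤ l₀ ^ p := by
        have := Real.rpow_le_rpow (Real.rpow_nonneg hm0 _) hle hp.le
        rwa [← Real.rpow_mul hm0, one_div, inv_mul_cancel₀ hp.ne', Real.rpow_one] at this
      have h2 : (0:ℝ) < l₀ ^ p := Real.rpow_pos_of_pos hl₀pos _
      rw [one_div, Real.inv_rpow hl₀pos.le, ← div_eq_mul_inv, div_le_one h2]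
      exact h1
    have hA := hpow pp hpp (le_max_left _ _)
    have hB := hpow pm hpm (le_max_right _ _)
    rw [mul_max_of_nonneg _ _ hm0]
    exact max_le hA hB

lemma luxNorm_Mn_ge {q : ℝ} (hq : 0 < q) (B : ℝ → ℝ) (hB0 : B 0 = 0)
    (hBsmall : ∀ t : ℝ, 0 < t → t ≤ 1 → B t ≤ t ^ q)
    (hBbig : ∀ t : ℝ, 1 ≤ t → t ^ q ≤ B t)
    (κ : Measure α) {U : Set α} (hU : MeasurableSet U) :
    min 1 ((κ U).toReal ^ (1/q)) ≤ luxNorm B κ (U.indicator fun _ => (1:ℝ)) := by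
  rw [luxNorm_indicator_eq _ hB0 κ hU]
  set k := (κ U).toReal with hk
  have hk0 : 0 ≤ k := ENNReal.toReal_nonneg
  have hne : {l : ℝ | 0 < l ∧ k * B (1/l) ≤ 1}.Nonempty := by
    refine ⟨max 1 (k ^ (1/q)), lt_max_of_lt_left one_pos, ?_⟩
    set l₁ := max 1 (k ^ (1/q)) with hl₁
    have hl₁pos : (0:ℝ) < l₁ := lt_max_of_lt_left one_pos
    have hl₁1 : (1:ℝ) ≤ l₁ := le_max_left _ _
    have hinv : 0 < 1/l₁ := by positivity
    have hinvle : 1/l₁ ≤ 1 := by rw [div_le_one hl₁pos]; exact hl₁1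
    have h1 : B (1/l₁) ≤ (1/l₁) ^ q := hBsmall _ hinv hinvle
    have h2 : k ≤ l₁ ^ q := by
      have h2a : (k ^ (1/q)) ^ q ≤ l₁ ^ q :=
        Real.rpow_le_rpow (Real.rpow_nonneg hk0 _) (le_max_right _ _) hq.le
      rwa [← Real.rpow_mul hk0, one_div_mul_cancel hq.ne', Real.rpow_one] at h2a
    have h3 : (0:ℝ) < l₁ ^ q := Real.rpow_pos_of_pos hl₁pos _
    calc k * B (1/l₁) ≤ k * (1/l₁) ^ q := mul_le_mul_of_nonneg_left h1 hk0
      _ = k / l₁ ^ q := by rw [one_div, Real.inv_rpow hl₁pos.le, div_eq_mul_inv]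
      _ ≤ 1 := by rw [div_le_one h3]; exact h2
  refine le_csInf hne fun b hb => ?_
  obtain ⟨hbpos, hble⟩ := hb
  rcases le_or_gt 1 b with h1b | h1b
  · exact le_trans (min_le_left _ _) h1b
  · have hinv : (1:ℝ) ≤ 1/b := by rw [le_div_iff₀ hbpos]; linarith
    have h1 : (1/b) ^ q ≤ B (1/b) := hBbig _ hinv
    have h2 : k * (1/b) ^ q ≤ 1 := le_trans (mul_le_mul_of_nonneg_left h1 hk0) hble
    have h3 : (0:ℝ) < b ^ q := Real.rpow_pos_of_pos hbpos _
    have h4 : k ≤ b ^ q := by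
      rw [one_div, Real.inv_rpow hbpos.le, ← div_eq_mul_inv, div_le_one h3] at h2
      exact h2
    have h5 : k ^ (1/q) ≤ b := by
      have h5a : k ^ (1/q) ≤ (b ^ q) ^ (1/q) :=
        Real.rpow_le_rpow hk0 h4 (by positivity)
      rwa [← Real.rpow_mul hbpos.le, mul_one_div, div_self hq.ne', Real.rpow_one] at h5a
    exact le_trans (min_le_right _ _) h5


/-- First part of Lemma 4.6 (Lema 1): under the reverse Hölder inequality
`S ‖χ_U‖_{M_n,ν} ≤ ‖χ_U‖_{A_∞,μ}`, the measure `ν` is absolutely continuous with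
respect to `μ` and its Radon–Nikodym density is essentially bounded. -/
theorem abs_continuous_bounded_density (n : ℕ) (hn : 2 ≤ n) (a A : ℝ → ℝ) (pm pp : ℝ)
    (hA : IsYoungPair a A) (hpm : 1 < pm) (hpmpp : pm ≤ pp) (hppn : pp < n)
    (hpstar : pp < (n : ℝ) * pm / ((n : ℝ) - pm))
    (hδ : ∀ t, 0 < t → pm ≤ t * a t / A t ∧ t * a t / A t ≤ pp)
    (hA2 : ∃ K : ℝ, 0 < K ∧
      ¬ IntegrableOn (fun t : ℝ => (t / A t) ^ ((1:ℝ) / ((n:ℝ) - 1))) (Set.Ioi K) volume)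
    (hA3 : ∃ d : ℝ, 0 < d ∧
      IntegrableOn (fun t : ℝ => (t / A t) ^ ((1:ℝ) / ((n:ℝ) - 1))) (Set.Ioc 0 d) volume)
    (hHmono : StrictMonoOn (Hfun A n) (Set.Ici 0))
    (Hinv : ℝ → ℝ)
    (hHinv₁ : ∀ t, 0 ≤ t → Hinv (Hfun A n t) = t)
    (hHinv₂ : ∀ s, 0 ≤ s → Hfun A n (Hinv s) = s)
    (ν μ : Measure (Fin n → ℝ)) [IsFiniteMeasure ν] [IsFiniteMeasure μ]
    (S : ℝ) (hS : 0 < S)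
    (hrh : ∀ U : Set (Fin n → ℝ), MeasurableSet U →
      S * luxNorm (matus (fun s => A (Hinv s))) ν (U.indicator fun _ => (1:ℝ))
        ≤ luxNorm (fun t => max (t ^ pp) (t ^ pm)) μ (U.indicator fun _ => (1:ℝ))) :
    ν ≪ μ ∧ ∃ C : ℝ≥0∞, C < ⊤ ∧ ∀ᵐ x ∂μ, ν.rnDeriv μ x ≤ C := by
  have hnR : (2:ℝ) ≤ (n:ℝ) := nR hn
  have hpm0 : 0 < pm := lt_trans one_pos hpm
  have hpp0 : 0 < pp := lt_of_lt_of_le hpm0 hpmpp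
  have hpmn : pm < (n:ℝ) := lt_of_le_of_lt hpmpp hppn
  have hnm : (0:ℝ) < (n:ℝ) - pm := by linarith
  set q : ℝ := (n:ℝ) * pm / ((n:ℝ) - pm) with hqdef
  have hq0 : 0 < q := div_pos (by positivity) hnm
  have hqpp : pp < q := hpstar
  have hqpm : pm < q := lt_of_le_of_lt hpmpp hqpp
  -- properties of the Matuszewska–Orlicz function
  have hMn0 : matus (fun s => A (Hinv s)) 0 = 0 :=
    matus_Bn_zero hn hA hA2 hA3 hHinv₁ hHinv₂
  have hMnsmall : ∀ t : ℝ, 0 < t → t ≤ 1 → matus (fun s => A (Hinv s)) t ≤ t ^ q :=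
    fun t h1 h2 => matus_Bn_le_small hn hA hA2 hA3 hδ hHmono hHinv₁ hHinv₂ hpmn h1 h2
  have hMnbig : ∀ t : ℝ, 1 ≤ t → t ^ q ≤ matus (fun s => A (Hinv s)) t :=
    fun t h1 => matus_Bn_ge hn hA hA2 hA3 hδ hHmono hHinv₁ hHinv₂ hpmn hppn h1
  -- constants
  set M : ℝ := (μ univ).toReal with hM
  set K₀ : ℝ := (ν univ).toReal with hK₀
  have hK₀0 : 0 ≤ K₀ := ENNReal.toReal_nonneg
  set δ0 : ℝ := min (S ^ pp) (S ^ pm) with hδ0def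
  have hδ0pos : 0 < δ0 := lt_min (Real.rpow_pos_of_pos hS _) (Real.rpow_pos_of_pos hS _)
  set E : ℝ := max ((max M 1) ^ (q/pp - 1)) ((max M 1) ^ (q/pm - 1)) with hEdef
  have hE0 : 0 ≤ E := le_trans (Real.rpow_nonneg (le_trans zero_le_one (le_max_right M 1)) _)
    (le_max_left _ _)
  have hSq : (0:ℝ) < S ^ q := Real.rpow_pos_of_pos hS _
  set C : ℝ := max (K₀ / δ0) (E / S ^ q) with hCdef
  -- the key pointwise inequality
  have hkey : ∀ U : Set (Fin n → ℝ), MeasurableSet U →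
      (ν U).toReal ≤ C * (μ U).toReal := by
    intro U hU
    set k : ℝ := (ν U).toReal with hkdef
    set m : ℝ := (μ U).toReal with hmdef
    have hk0 : 0 ≤ k := ENNReal.toReal_nonneg
    have hm0 : 0 ≤ m := ENNReal.toReal_nonneg
    have hLν := luxNorm_Mn_ge hq0 (matus (fun s => A (Hinv s))) hMn0 hMnsmall hMnbig ν hU
    have hLμ := luxNorm_Aoo_le hpm0 hpp0 μ hU
    have hstar : S * min 1 (k ^ (1/q)) ≤ max (m ^ (1/pp)) (m ^ (1/pm)) :=
      le_trans (mul_le_mul_of_nonneg_left hLν hS.le) (le_trans (hrh U hU) hLμ)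
    rcases eq_or_lt_of_le hm0 with hm | hm
    · -- μ U = 0 forces ν U = 0
      rw [← hm, Real.zero_rpow (by positivity : (1:ℝ)/pp ≠ 0),
        Real.zero_rpow (by positivity : (1:ℝ)/pm ≠ 0), max_self] at hstar
      have h1 : min 1 (k ^ (1/q)) ≤ 0 := by nlinarith
      have h2 : k ^ (1/q) ≤ 0 := by
        rcases min_le_iff.1 h1 with h | h
        · linarith
        · exact h
      have h3 : k ≤ 0 := by
        by_contra hcon
        push_neg at hcon
        exact absurd h2 (Real.rpow_pos_of_pos hcon _).not_ge
      calc k ≤ 0 := h3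
        _ ≤ C * m := by
            rw [← hm, mul_zero]
    · rcases le_or_gt 1 (k ^ (1/q)) with hcase | hcase
      · -- large case
        have h1 : S ≤ max (m ^ (1/pp)) (m ^ (1/pm)) := by
          rw [min_eq_left hcase, mul_one] at hstar
          exact hstar
        have hmδ : δ0 ≤ m := by
          rcases max_cases (m ^ (1/pp)) (m ^ (1/pm))  with ⟨heq, _⟩ | ⟨heq, _⟩
          · rw [heq] at h1
            have h2 : S ^ pp ≤ (m ^ (1/pp)) ^ pp := Real.rpow_le_rpow hS.le h1 hpp0.le
            rw [← Real.rpow_mul hm0, one_div_mul_cancel hpp0.ne', Real.rpow_one] at h2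
            exact le_trans (min_le_left _ _) h2
          · rw [heq] at h1
            have h2 : S ^ pm ≤ (m ^ (1/pm)) ^ pm := Real.rpow_le_rpow hS.le h1 hpm0.le
            rw [← Real.rpow_mul hm0, one_div_mul_cancel hpm0.ne', Real.rpow_one] at h2
            exact le_trans (min_le_right _ _) h2
        have hkK : k ≤ K₀ :=
          ENNReal.toReal_mono (measure_ne_top ν _) (measure_mono (subset_univ U))
        calc k ≤ K₀ := hkK
          _ = (K₀ / δ0) * δ0 := by field_simp
          _ ≤ (K₀ / δ0) * m := mul_le_mul_of_nonneg_left hmδ (by positivity)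
          _ ≤ C * m := mul_le_mul_of_nonneg_right (le_max_left _ _) hm0
      · -- small case
        set R : ℝ := max (m ^ (1/pp)) (m ^ (1/pm)) with hRdef
        have hR0 : 0 ≤ R := le_trans (Real.rpow_nonneg hm0 _) (le_max_left _ _)
        have hstar2 : S * k ^ (1/q) ≤ R := by
          rw [min_eq_right hcase.le] at hstar
          exact hstar
        have hkq : k ^ (1/q) ≤ R / S := by
          rw [le_div_iff₀ hS]
          linarith [hstar2]
        have hkle : k ≤ (R/S) ^ q := by
          have h1 : (k ^ (1/q)) ^ q ≤ (R/S) ^ q :=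
            Real.rpow_le_rpow (Real.rpow_nonneg hk0 _) hkq hq0.le
          rwa [← Real.rpow_mul hk0, one_div_mul_cancel hq0.ne', Real.rpow_one] at h1
        have hmM1 : m ≤ max M 1 := by
          refine le_trans ?_ (le_max_left M 1)
          exact ENNReal.toReal_mono (measure_ne_top μ _) (measure_mono (subset_univ U))
        have haux : ∀ p : ℝ, 0 < p → p ≤ q →
            (m ^ (1/p)) ^ q ≤ (max M 1) ^ (q/p - 1) * m := by
          intro p hp hpq
          have hqp1 : 1 ≤ q / p := (one_le_div hp).2 hpq
          have h1 : (m ^ (1/p)) ^ q = m ^ (q/p) := by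
            rw [← Real.rpow_mul hm0]
            congr 1
            field_simp
          have h2 : m ^ (q/p) = m ^ (q/p - 1) * m := by
            rw [← Real.rpow_add_one hm.ne' (q/p - 1), sub_add_cancel]
          have h3 : m ^ (q/p - 1) ≤ (max M 1) ^ (q/p - 1) :=
            Real.rpow_le_rpow hm0 hmM1 (by linarith)
          rw [h1, h2]
          exact mul_le_mul_of_nonneg_right h3 hm0
        have hRq : R ^ q ≤ E * m := by
          rcases max_cases (m ^ (1/pp)) (m ^ (1/pm)) with ⟨heq, _⟩ | ⟨heq, _⟩
          · rw [hRdef, heq]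
            calc (m ^ (1/pp)) ^ q ≤ (max M 1) ^ (q/pp - 1) * m := haux pp hpp0 hqpp.le
              _ ≤ E * m := mul_le_mul_of_nonneg_right (le_max_left _ _) hm0
          · rw [hRdef, heq]
            calc (m ^ (1/pm)) ^ q ≤ (max M 1) ^ (q/pm - 1) * m := haux pm hpm0 hqpm.le
              _ ≤ E * m := mul_le_mul_of_nonneg_right (le_max_right _ _) hm0
        calc k ≤ (R/S) ^ q := hkle
          _ = R ^ q / S ^ q := Real.div_rpow hR0 hS.le _
          _ ≤ (E * m) / S ^ q := by
              rw [div_le_div_iff₀ hSq hSq]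
              nlinarith
          _ = (E / S ^ q) * m := by ring
          _ ≤ C * m := mul_le_mul_of_nonneg_right (le_max_right _ _) hm0
  -- convert to a measure inequality
  set Creal : ℝ := max C 1 with hCreal
  have hCreal1 : (1:ℝ) ≤ Creal := le_max_right _ _
  have hCreal0 : (0:ℝ) < Creal := lt_of_lt_of_le one_pos hCreal1
  set cNN : ℝ≥0 := Creal.toNNReal with hcNN
  have hcNN0 : cNN ≠ 0 := by
    rw [hcNN]
    exact (Real.toNNReal_pos.2 hCreal0).ne'
  have hle : ν ≤ cNN • μ := by
    rw [Measure.le_iff]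
    intro s hs
    have hk := hkey s hs
    calc ν s = ENNReal.ofReal (ν s).toReal := (ENNReal.ofReal_toReal (measure_ne_top ν s)).symm
      _ ≤ ENNReal.ofReal (Creal * (μ s).toReal) := by
          refine ENNReal.ofReal_le_ofReal (le_trans hk ?_)
          exact mul_le_mul_of_nonneg_right (le_max_left _ _) ENNReal.toReal_nonneg
      _ = ENNReal.ofReal Creal * ENNReal.ofReal (μ s).toReal :=
          ENNReal.ofReal_mul hCreal0.le
      _ = (cNN : ℝ≥0∞) * μ s := by
          rw [ENNReal.ofReal_toReal (measure_ne_top μ s)]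
          rfl
      _ = (cNN • μ) s := by
          rw [Measure.smul_apply, ENNReal.smul_def, smul_eq_mul]
  have habs : ν ≪ μ := by
    refine Measure.AbsolutelyContinuous.mk fun s hs h0 => ?_
    have h1 := Measure.le_iff.1 hle s hs
    rw [Measure.smul_apply, h0, ENNReal.smul_def, smul_eq_mul, mul_zero] at h1
    exact le_antisymm h1 zero_le
  refine ⟨habs, (cNN : ℝ≥0∞), ENNReal.coe_lt_top, ?_⟩
  have hμac : μ ≪ cNN • μ := by
    refine Measure.AbsolutelyContinuous.mk fun s hs h0 => ?_
    rw [Measure.smul_apply, ENNReal.smul_def, smul_eq_mul] at h0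
    rcases mul_eq_zero.1 h0 with h | h
    · exact absurd h (by simpa using hcNN0)
    · exact h
  have h1 : ν.rnDeriv (cNN • μ) ≤ᵐ[cNN • μ] 1 := Measure.rnDeriv_le_one_of_le hle
  have h1' : ν.rnDeriv (cNN • μ) ≤ᵐ[μ] 1 := hμac.ae_le h1
  have h2 : ν.rnDeriv (cNN • μ) =ᵐ[μ] cNN⁻¹ • ν.rnDeriv μ :=
    Measure.rnDeriv_smul_right' ν μ hcNN0
  filter_upwards [h1', h2] with x hx1 hx2
  have hx3 : ((cNN : ℝ≥0∞))⁻¹ * ν.rnDeriv μ x ≤ 1 := by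
    rw [hx2] at hx1
    simpa [Pi.smul_apply, ENNReal.smul_def, ENNReal.coe_inv hcNN0] using hx1
  calc ν.rnDeriv μ x
      = (cNN : ℝ≥0∞) * (((cNN : ℝ≥0∞))⁻¹ * ν.rnDeriv μ x) := by
        rw [← mul_assoc, ENNReal.mul_inv_cancel (by simpa using hcNN0) ENNReal.coe_ne_top,
          one_mul]
    _ ≤ (cNN : ℝ≥0∞) * 1 := mul_le_mul_right hx3 _
    _ = (cNN : ℝ≥0∞) := mul_one _
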